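/- For every n ≥ 1 and every vector ψ : (Fin n → Fin 2) → ℂ, |∑_{f,g} conj(ψ f) · (M_n f g) · (ψ g)| ≤ 2^(n−1) · ∑_f ‖ψ f‖². Hence the quantum maximum of the MABK expression in this realization is 2^{n−1}, attained on unit vectors. -/

import Mathlib

/-!
Since `X + iY = 2|0⟩⟨1|` and `X − iY = 2|1⟩⟨0|`, the operator `M_n` is
`(2ⁿ/2i)(|0…0⟩⟨1…1| − |1…1⟩⟨0…0|)`. With `a = ψ(0…0)` and `b = ψ(1…1)` its quadratic form is
`(2ⁿ/2i)(ā b − b̄ a)`, of modulus at most `2^(n−1) · 2|a||b| ≤ 2^(n−1)(|a|² + |b|²)`, and for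
`n ≥ 1` the two basis vectors are distinct, so `|a|² + |b|² ≤ ‖ψ‖²`.
-/

open Matrix BigOperators

noncomputable section

/-- Pauli X matrix. -/
def pauliX : Matrix (Fin 2) (Fin 2) ℂ := !![0, 1; 1, 0]

/-- Pauli Y matrix. -/
def pauliY : Matrix (Fin 2) (Fin 2) ℂ := !![0, -Complex.I; Complex.I, 0]

/-- n-fold tensor (Kronecker) product of a family of 2×2 matrices,
defined entrywise by `T(A) f g = ∏ j, (A j) (f j) (g j)`. -/
def tensor {n : ℕ} (A : Fin n → Matrix (Fin 2) (Fin 2) ℂ) :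
    Matrix (Fin n → Fin 2) (Fin n → Fin 2) ℂ :=
  Matrix.of fun f g => ∏ j, A j (f j) (g j)

/-- The n-partite MABK operator
`M_n = (1/(2i)) (⊗ⱼ (X + iY) − ⊗ⱼ (X − iY))`. -/
def MABK (n : ℕ) : Matrix (Fin n → Fin 2) (Fin n → Fin 2) ℂ :=
  (1 / (2 * Complex.I)) •
    (tensor (fun _ : Fin n => pauliX + Complex.I • pauliY)
      - tensor (fun _ : Fin n => pauliX - Complex.I • pauliY))

/-- The n-qubit GHZ state `(|0…0⟩ + i|1…1⟩)/√2`. -/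
def GHZ (n : ℕ) : (Fin n → Fin 2) → ℂ :=
  fun f =>
    if f = fun _ => 0 then 1 / (Real.sqrt 2 : ℂ)
    else if f = fun _ => 1 then Complex.I / (Real.sqrt 2 : ℂ)
    else 0

/-- The phase-flipped n-qubit GHZ state `(|0…0⟩ − i|1…1⟩)/√2`. -/
def GHZ' (n : ℕ) : (Fin n → Fin 2) → ℂ :=
  fun f =>
    if f = fun _ => 0 then 1 / (Real.sqrt 2 : ℂ)
    else if f = fun _ => 1 then -Complex.I / (Real.sqrt 2 : ℂ)
    else 0

open Complex ComplexConjugate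

lemma pauliX_add_I_smul_pauliY : pauliX + I • pauliY = single 0 1 2 := by
  ext a b
  fin_cases a <;> fin_cases b <;> simp [pauliX, pauliY]
  norm_num

lemma pauliX_sub_I_smul_pauliY : pauliX - I • pauliY = single 1 0 2 := by
  ext a b
  fin_cases a <;> fin_cases b <;> simp [pauliX, pauliY]
  norm_num

lemma tensor_const_single {n : ℕ} (a b : Fin 2) (c : ℂ) :
    tensor (fun _ : Fin n => single a b c) = single (fun _ => a) (fun _ => b) (c ^ n) := by
  ext f g
  rw [tensor, of_apply, single_apply]
  by_cases h : (fun _ => a) = f ∧ (fun _ => b) = g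
  · obtain ⟨rfl, rfl⟩ := h
    simp
  · obtain ⟨j, hj⟩ : ∃ j, ¬(a = f j ∧ b = g j) := by
      by_contra! hall
      exact h ⟨funext fun j => (hall j).1, funext fun j => (hall j).2⟩
    rw [if_neg h]
    exact Finset.prod_eq_zero (Finset.mem_univ j) (by rw [single_apply, if_neg hj])

lemma MABK_eq_smul_sub_single (n : ℕ) :
    MABK n = (1 / (2 * I)) •
      (single (fun _ => 0) (fun _ => 1) (2 ^ n) - single (fun _ => 1) (fun _ => 0) (2 ^ n)) := by
  rw [MABK, pauliX_add_I_smul_pauliY, pauliX_sub_I_smul_pauliY, tensor_const_single,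
    tensor_const_single]

lemma sum_sum_conj_mul_single_mul {ι R : Type*} [Fintype ι] [DecidableEq ι] [CommSemiring R]
    [StarRing R] (ψ : ι → R) (i j : ι) (c : R) :
    ∑ f, ∑ g, starRingEnd R (ψ f) * single i j c f g * ψ g = starRingEnd R (ψ i) * c * ψ j := by
  simp [single_apply, ite_and]

lemma sum_sum_conj_mul_MABK_mul (n : ℕ) (ψ : (Fin n → Fin 2) → ℂ) :
    ∑ f, ∑ g, conj (ψ f) * MABK n f g * ψ g =
      2 ^ n / (2 * I) * (conj (ψ fun _ => 0) * ψ (fun _ => 1)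
        - conj (ψ fun _ => 1) * ψ (fun _ => 0)) := by
  have hsplit : ∀ f g, conj (ψ f) * MABK n f g * ψ g = (1 / (2 * I)) *
      (conj (ψ f) * single (fun _ => 0) (fun _ => 1) (2 ^ n) f g * ψ g
        - conj (ψ f) * single (fun _ => 1) (fun _ => 0) (2 ^ n) f g * ψ g) := by
    intro f g
    rw [MABK_eq_smul_sub_single, Matrix.smul_apply, Matrix.sub_apply, smul_eq_mul]
    ring
  simp only [hsplit, ← Finset.mul_sum, Finset.sum_sub_distrib, sum_sum_conj_mul_single_mul]
  ring

lemma norm_two_pow_div_two_mul_I {n : ℕ} (hn : 1 ≤ n) : ‖(2 : ℂ) ^ n / (2 * I)‖ = 2 ^ (n - 1) := by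
  obtain ⟨k, rfl⟩ := Nat.exists_eq_add_of_le' hn
  simp [pow_succ]

lemma norm_conj_mul_sub_conj_mul_le (a b : ℂ) :
    ‖conj a * b - conj b * a‖ ≤ ‖a‖ ^ 2 + ‖b‖ ^ 2 :=
  calc ‖conj a * b - conj b * a‖ ≤ ‖conj a * b‖ + ‖conj b * a‖ := norm_sub_le _ _
    _ = 2 * ‖a‖ * ‖b‖ := by simp only [norm_mul, RCLike.norm_conj]; ring
    _ ≤ ‖a‖ ^ 2 + ‖b‖ ^ 2 := two_mul_le_add_sq _ _

lemma add_le_sum_of_ne {ι : Type*} [Fintype ι] [DecidableEq ι] {w : ι → ℝ} (hw : 0 ≤ w)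
    {i j : ι} (hij : i ≠ j) : w i + w j ≤ ∑ k, w k := by
  rw [← Finset.sum_pair hij]
  exact Finset.sum_le_sum_of_subset_of_nonneg (Finset.subset_univ _) fun k _ _ => hw k

/-- The quantum maximum of the MABK expression in this realization is 2^(n−1):
for every vector ψ, |⟨ψ|M_n|ψ⟩| ≤ 2^(n−1) ⟨ψ|ψ⟩. -/
theorem mabk_quantum_bound (n : ℕ) (hn : 1 ≤ n) (ψ : (Fin n → Fin 2) → ℂ) :
    ‖∑ f, ∑ g, (starRingEnd ℂ) (ψ f) * MABK n f g * ψ g‖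
      ≤ 2 ^ (n - 1) * ∑ f, ‖ψ f‖ ^ 2 := by
  have hne : (fun _ : Fin n => (0 : Fin 2)) ≠ fun _ => 1 := fun h => by
    simpa using congrFun h ⟨0, hn⟩
  rw [sum_sum_conj_mul_MABK_mul, norm_mul, norm_two_pow_div_two_mul_I hn]
  gcongr
  exact (norm_conj_mul_sub_conj_mul_le _ _).trans
    (add_le_sum_of_ne (w := fun f => ‖ψ f‖ ^ 2) (fun _ => by positivity) hne)
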